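/- For every λ ∈ ℂ and every t ≥ 0, the characteristic functions of W^n(t) converge: lim_{n→∞} E[exp(iλ·W^n(t))] = exp(i^N · λ^N · α·t / N!), where i is the imaginary unit. -/

import Mathlib

open MeasureTheory ProbabilityTheory Filter

/-- The rescaled complex random walk `W^n(t) = n^{-1/N} ∑_{k=1}^{⌊nt⌋} ξ_k`. -/
noncomputable def W {Ω : Type*} (ξ : ℕ → Ω → ℂ) (N n : ℕ) (t : ℝ) (ω : Ω) : ℂ :=
  (((n : ℝ) ^ (-(1 / (N : ℝ))) : ℝ) : ℂ) * ∑ k ∈ Finset.Icc 1 ⌊(n : ℝ) * t⌋₊, ξ k ω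

/-!
Since `ξ_k` are i.i.d., `E[exp(iλ W^n(t))] = φ(iλβ n^{-1/N})^{⌊nt⌋}`, where
`φ(w) = N⁻¹ ∑_j exp(w ζ^j)` averages `exp` over the `N`-th roots of unity `ζ^j`.
Averaging over the roots of unity kills every Taylor coefficient of `exp` of degree not divisible
by `N`, so `φ(w) = 1 + w^N/N! + O(w^{N+1})`. As `(iλβ n^{-1/N})^N = i^N λ^N α / n`, this gives
`⌊nt⌋ (φ - 1) → i^N λ^N α t / N!`, and `(1 + g_n)^{m_n} → exp a` whenever `g_n → 0` and
`m_n g_n → a`.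
-/

open Complex Asymptotics Finset
open scoped Nat Real Topology ENNReal

noncomputable def rootsOfUnityMeanExp (N : ℕ) (w : ℂ) : ℂ :=
  (N : ℂ)⁻¹ * ∑ j ∈ range N, exp (w * exp (2 * π * I * j / N))

lemma sum_exp_two_pi_I_mul_div_pow {N : ℕ} (hN : N ≠ 0) (p : ℕ) :
    ∑ j ∈ range N, exp (2 * π * I * j / N) ^ p = if N ∣ p then (N : ℂ) else 0 := by
  have hζ := isPrimitiveRoot_exp N hN
  have hpow : ∀ j : ℕ, exp (2 * π * I * j / N) ^ p = (exp (2 * π * I / N) ^ p) ^ j := by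
    intro j
    rw [← exp_nat_mul, ← exp_nat_mul, ← exp_nat_mul]
    ring_nf
  simp_rw [hpow]
  split_ifs with hdvd
  · simp [(hζ.pow_eq_one_iff_dvd p).2 hdvd]
  · rw [geom_sum_eq ((hζ.pow_eq_one_iff_dvd p).not.2 hdvd), ← pow_mul, mul_comm p N, pow_mul,
      hζ.pow_eq_one, one_pow, sub_self, zero_div]

lemma rootsOfUnity_mean_sum_range_succ_pow_div_factorial {N : ℕ} (hN : N ≠ 0) (w : ℂ) :
    (N : ℂ)⁻¹ * ∑ j ∈ range N, ∑ p ∈ range (N + 1), (w * exp (2 * π * I * j / N)) ^ p / p !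
      = 1 + w ^ N / N ! := by
  have hfilter : ∀ p ∈ range N, p ≠ 0 → ¬ N ∣ p := fun p hp hp0 hdvd =>
    hp0 (Nat.eq_zero_of_dvd_of_lt hdvd (mem_range.1 hp))
  calc (N : ℂ)⁻¹ * ∑ j ∈ range N, ∑ p ∈ range (N + 1), (w * exp (2 * π * I * j / N)) ^ p / p !
      = (N : ℂ)⁻¹ * ∑ p ∈ range (N + 1),
          w ^ p / p ! * ∑ j ∈ range N, exp (2 * π * I * j / N) ^ p := by
        simp_rw [sum_comm (s := range N), mul_sum, mul_pow, div_mul_eq_mul_div]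
    _ = 1 + w ^ N / N ! := by
        simp_rw [sum_exp_two_pi_I_mul_div_pow hN]
        rw [sum_range_succ, sum_eq_single_of_mem 0 (mem_range.2 (Nat.pos_of_ne_zero hN))
            (fun p hp hp0 => by simp [hfilter p hp hp0])]
        simp only [dvd_zero, dvd_refl, if_true]
        field_simp
        ring

lemma rootsOfUnityMeanExp_sub_isBigO {N : ℕ} (hN : N ≠ 0) :
    (fun w => rootsOfUnityMeanExp N w - 1 - w ^ N / N !) =O[𝓝 0] (· ^ (N + 1)) := by
  have hrem : ∀ w, rootsOfUnityMeanExp N w - 1 - w ^ N / N ! = (N : ℂ)⁻¹ * ∑ j ∈ range N,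
      (exp (w * exp (2 * π * I * j / N)) -
        ∑ p ∈ range (N + 1), (w * exp (2 * π * I * j / N)) ^ p / p !) := by
    intro w
    rw [sum_sub_distrib, mul_sub, rootsOfUnity_mean_sum_range_succ_pow_div_factorial hN,
      rootsOfUnityMeanExp]
    ring
  simp_rw [hrem]
  refine (IsBigO.fun_sum fun j _ => ?_).const_mul_left _
  set e := exp (2 * π * I * j / N)
  have he : Tendsto (· * e) (𝓝 0) (𝓝 0) := by
    simpa using (continuous_mul_const e).tendsto 0
  refine ((exp_sub_sum_range_isBigO_pow (N + 1)).comp_tendsto he).trans ?_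
  simp_rw [Function.comp_def, mul_pow, mul_comm _ (e ^ _)]
  exact (isBigO_refl _ _).const_mul_left _

lemma tendsto_one_add_pow_exp_of_tendsto_mul {ι : Type*} {l : Filter ι} {m : ι → ℕ}
    {g : ι → ℂ} {a : ℂ} (hg : Tendsto g l (𝓝 0))
    (hmg : Tendsto (fun i => (m i : ℂ) * g i) l (𝓝 a)) :
    Tendsto (fun i => (1 + g i) ^ m i) l (𝓝 (exp a)) := by
  have hlog : Tendsto (fun i => m i * log (1 + g i)) l (𝓝 a) := by
    have hrem : (fun i => (m i : ℂ) * (log (1 + g i) - g i)) =O[l] fun i => m i * g i * g i := by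
      simpa [sq, mul_assoc] using (isBigO_refl (fun i => (m i : ℂ)) l).mul
        (log_sub_self_isBigO.comp_tendsto hg)
    have := hmg.add (hrem.trans_tendsto (by simpa using hmg.mul hg))
    simpa [mul_sub] using this
  refine ((continuous_exp.tendsto a).comp hlog).congr' ?_
  filter_upwards [(hg.const_add 1).eventually_ne (by simp : (1 : ℂ) + 0 ≠ 0)] with i hi
  simp [exp_nat_mul, exp_log hi]

lemma tendsto_rootsOfUnityMeanExp_pow {N : ℕ} (hN : N ≠ 0) {ι : Type*} {l : Filter ι}
    {m : ι → ℕ} {w : ι → ℂ} {a : ℂ} (hw : Tendsto w l (𝓝 0))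
    (hmw : Tendsto (fun i => (m i : ℂ) * w i ^ N) l (𝓝 a)) :
    Tendsto (fun i => rootsOfUnityMeanExp N (w i) ^ m i) l (𝓝 (exp (a / N !))) := by
  have hrem := (rootsOfUnityMeanExp_sub_isBigO hN).comp_tendsto hw
  have hg : Tendsto (fun i => rootsOfUnityMeanExp N (w i) - 1) l (𝓝 0) := by
    have hpow : Tendsto (fun i => w i ^ (N + 1)) l (𝓝 0) := by simpa using hw.pow (N + 1)
    simpa [hN] using (hrem.trans_tendsto hpow).add ((hw.pow N).div_const (N ! : ℂ))
  have hmrem : (fun i => (m i : ℂ) * (rootsOfUnityMeanExp N (w i) - 1 - w i ^ N / N !))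
      =O[l] fun i => m i * w i ^ N * w i := by
    simpa [pow_succ, mul_assoc] using (isBigO_refl (fun i => (m i : ℂ)) l).mul hrem
  have hmg : Tendsto (fun i => (m i : ℂ) * (rootsOfUnityMeanExp N (w i) - 1)) l
      (𝓝 (a / N !)) := by
    have := (hmw.div_const (N ! : ℂ)).add (hmrem.trans_tendsto (by simpa using hmw.mul hw))
    simpa [mul_sub, mul_div_assoc] using this
  simpa using tendsto_one_add_pow_exp_of_tendsto_mul hg hmg

theorem ProbabilityTheory.iIndepFun.integral_fun_finsetProd_eq_prod_integral
    {Ω ι 𝕜 : Type*} [RCLike 𝕜] [MeasurableSpace Ω] {μ : Measure Ω} {X : ι → Ω → 𝕜}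
    (hX : iIndepFun X μ) (mX : ∀ i, AEStronglyMeasurable (X i) μ) (s : Finset ι) :
    ∫ ω, ∏ i ∈ s, X i ω ∂μ = ∏ i ∈ s, ∫ ω, X i ω ∂μ := by
  simp_rw [← prod_coe_sort s]
  exact (hX.precomp Subtype.val_injective).integral_fun_prod_eq_prod_integral fun i => mX i

lemma integral_exp_mul_eq_rootsOfUnityMeanExp {Ω : Type*} [MeasurableSpace Ω] {μ : Measure Ω}
    {X : Ω → ℂ} {N : ℕ} {β : ℂ} (hX : Measurable X)
    (hdist : Measure.map X μ = (N : ℝ≥0∞)⁻¹ •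
      ∑ j ∈ range N, Measure.dirac (β * exp (2 * π * I * j / N)))
    (z : ℂ) :
    ∫ ω, exp (z * X ω) ∂μ = rootsOfUnityMeanExp N (z * β) := by
  have hf : Measurable fun x : ℂ => exp (z * x) := by fun_prop
  rw [← integral_map hX.aemeasurable hf.aestronglyMeasurable, hdist, integral_smul_measure,
    integral_finsetSum_measure fun j _ => integrable_dirac (by simp), rootsOfUnityMeanExp]
  simp [integral_dirac, mul_assoc]

lemma integral_exp_mul_W {Ω : Type*} [MeasurableSpace Ω] {μ : Measure Ω} {N : ℕ} {β : ℂ}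
    {ξ : ℕ → Ω → ℂ} (hmeas : ∀ k, Measurable (ξ k)) (hindep : iIndepFun ξ μ)
    (hdist : ∀ k, Measure.map (ξ k) μ = (N : ℝ≥0∞)⁻¹ •
      ∑ j ∈ range N, Measure.dirac (β * exp (2 * π * I * j / N)))
    (z : ℂ) (n : ℕ) (t : ℝ) :
    ∫ ω, exp (z * W ξ N n t ω) ∂μ =
      rootsOfUnityMeanExp N (z * (((n : ℝ) ^ (-(1 / (N : ℝ))) : ℝ) : ℂ) * β) ^ ⌊(n : ℝ) * t⌋₊ := by
  set c : ℂ := (((n : ℝ) ^ (-(1 / (N : ℝ))) : ℝ) : ℂ)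
  have hprod : ∀ ω, exp (z * W ξ N n t ω) = ∏ k ∈ Icc 1 ⌊(n : ℝ) * t⌋₊, exp (z * c * ξ k ω) := by
    intro ω
    rw [W, ← mul_assoc, mul_sum, exp_sum]
  have hexp : Measurable fun x : ℂ => exp (z * c * x) := by fun_prop
  have hindep' : iIndepFun (fun k ω => exp (z * c * ξ k ω)) μ := hindep.comp _ fun _ => hexp
  simp_rw [hprod]
  rw [hindep'.integral_fun_finsetProd_eq_prod_integral
    fun k => (hexp.comp (hmeas k)).aestronglyMeasurable]
  simp [integral_exp_mul_eq_rootsOfUnityMeanExp (hmeas _) (hdist _)]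

lemma tendsto_natFloor_mul_mul_rpow_neg_one_div_pow {N : ℕ} (hN : N ≠ 0) {t : ℝ} (ht : 0 ≤ t) :
    Tendsto (fun n : ℕ => (⌊(n : ℝ) * t⌋₊ : ℂ) * (((n : ℝ) ^ (-(1 / (N : ℝ))) : ℝ) : ℂ) ^ N)
      atTop (𝓝 t) := by
  have hfloor : Tendsto (fun n : ℕ => (⌊t * n⌋₊ : ℝ) / n) atTop (𝓝 t) :=
    (tendsto_nat_floor_mul_div_atTop ht).comp tendsto_natCast_atTop_atTop
  refine (continuous_ofReal.tendsto t).comp hfloor |>.congr' ?_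
  filter_upwards [eventually_ne_atTop 0] with n hn
  have hscale : ((n : ℝ) ^ (-(1 / (N : ℝ)))) ^ N = (n : ℝ)⁻¹ := by
    rw [← Real.rpow_natCast, ← Real.rpow_mul (Nat.cast_nonneg n), neg_mul, one_div,
      inv_mul_cancel₀ (Nat.cast_ne_zero.2 hN), Real.rpow_neg_one]
  rw [Function.comp_apply, ← ofReal_pow, hscale, mul_comm t]
  push_cast
  ring

theorem stmt_4_general {Ω : Type*} [MeasureSpace Ω]
    (N : ℕ) (hN : 2 < N) (α β : ℂ) (hβ : β ^ N = α)
    (ξ : ℕ → Ω → ℂ) (hmeas : ∀ k, Measurable (ξ k))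
    (hindep : iIndepFun ξ ℙ)
    (hdist : ∀ k, Measure.map (ξ k) ℙ = (N : ENNReal)⁻¹ •
      ∑ j ∈ Finset.range N,
        Measure.dirac (β * Complex.exp (2 * Real.pi * Complex.I * j / N)))
    (lam : ℂ) (t : ℝ) (ht : 0 ≤ t) :
    Tendsto (fun n : ℕ => ∫ ω, Complex.exp (Complex.I * lam * W ξ N n t ω) ∂ℙ) atTop
      (nhds (Complex.exp (Complex.I ^ N * lam ^ N * α * t / (N.factorial : ℂ)))) := by
  have hN0 : N ≠ 0 := by omega
  set c : ℕ → ℂ := fun n => (((n : ℝ) ^ (-(1 / (N : ℝ))) : ℝ) : ℂ)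
  have hc : Tendsto c atTop (𝓝 0) := by
    have := (tendsto_rpow_neg_atTop (by positivity : (0 : ℝ) < 1 / N)).comp
      tendsto_natCast_atTop_atTop
    rw [← ofReal_zero]
    exact (continuous_ofReal.tendsto 0).comp this
  have hw : Tendsto (fun n => I * lam * c n * β) atTop (𝓝 0) := by
    simpa using (hc.const_mul (I * lam)).mul_const β
  have hmw : Tendsto (fun n : ℕ => (⌊(n : ℝ) * t⌋₊ : ℂ) * (I * lam * c n * β) ^ N) atTop
      (𝓝 (t * (I * lam * β) ^ N)) := by
    convert (tendsto_natFloor_mul_mul_rpow_neg_one_div_pow hN0 ht).mul_const ((I * lam * β) ^ N)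
      using 2 with n
    simp only [c]
    ring
  simp_rw [integral_exp_mul_W hmeas hindep hdist]
  convert tendsto_rootsOfUnityMeanExp_pow hN0 hw hmw using 3
  rw [mul_pow, mul_pow, hβ]
  ring

/-- for every `λ ∈ ℂ` and `t ≥ 0`,
`lim_{n→∞} E[exp(iλW^n(t))] = exp(i^N λ^N αt/N!)`. -/
theorem stmt_4 {Ω : Type*} [MeasureSpace Ω] [IsProbabilityMeasure (ℙ : Measure Ω)]
    (N : ℕ) (hN : 2 < N) (α β : ℂ) (hα : α ≠ 0) (hβ : β ^ N = α)
    (ξ : ℕ → Ω → ℂ) (hmeas : ∀ k, Measurable (ξ k))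
    (hindep : iIndepFun ξ ℙ)
    (hdist : ∀ k, Measure.map (ξ k) ℙ = (N : ENNReal)⁻¹ •
      ∑ j ∈ Finset.range N,
        Measure.dirac (β * Complex.exp (2 * Real.pi * Complex.I * j / N)))
    (lam : ℂ) (t : ℝ) (ht : 0 ≤ t) :
    Tendsto (fun n : ℕ => ∫ ω, Complex.exp (Complex.I * lam * W ξ N n t ω) ∂ℙ) atTop
      (nhds (Complex.exp (Complex.I ^ N * lam ^ N * α * t / (N.factorial : ℂ)))) :=
  stmt_4_general N hN α β hβ ξ hmeas hindep hdist lam t ht
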